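/- For every integer n ≥ 1, 1 = ((-1)^(n-1)/(n-1)!) · Σ_{k=1}^{n} bel_k · S₂(n,k), where bel_k are the Bell numbers of the second kind. -/

import Mathlib

open PowerSeries Finset

noncomputable section

/-- Composition of formal power series (the standard composition when the inner
series `f` has zero constant term, since then `coeff n (f ^ k) = 0` for `k > n`). -/
def pcomp {R : Type*} [CommRing R] (g f : PowerSeries R) : PowerSeries R :=
  PowerSeries.mk fun n =>
    ∑ k ∈ Finset.range (n + 1), PowerSeries.coeff k g * PowerSeries.coeff n (f ^ k)

/-- The formal power series `log(1+t)` over `ℚ`. -/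
def Lq : PowerSeries ℚ := PowerSeries.mk fun n => if n = 0 then 0 else (-1) ^ (n + 1) / n

/-- The formal power series `-log(1-t)` over `ℚ`. -/
def Labs : PowerSeries ℚ := PowerSeries.mk fun n => if n = 0 then 0 else 1 / n

/-- Signed Stirling numbers of the first kind: `(log(1+t))^k / k! = Σ S₁(n,k) tⁿ/n!`. -/
def S1 (n k : ℕ) : ℚ := n.factorial / k.factorial * PowerSeries.coeff n (Lq ^ k)

/-- Unsigned Stirling numbers of the first kind: `(-log(1-t))^k / k! = Σ |s(n,k)| tⁿ/n!`. -/
def uS1 (n k : ℕ) : ℚ := n.factorial / k.factorial * PowerSeries.coeff n (Labs ^ k)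

/-- Stirling numbers of the second kind: `(eᵗ-1)^k / k! = Σ S₂(n,k) tⁿ/n!`. -/
def S2 (n k : ℕ) : ℚ :=
  n.factorial / k.factorial * PowerSeries.coeff n ((PowerSeries.exp ℚ - 1) ^ k)

/-- `λ^(n-1) * (1)_{n,1/λ} = ∏_{j=1}^{n-1} (λ - j)`. -/
def dc (l : ℚ) (n : ℕ) : ℚ := ∏ j ∈ Finset.Ico 1 n, (l - j)

/-- Degenerate falling factorial `(1)_{n,λ} = ∏_{j=0}^{n-1} (1 - jλ)`. -/
def ffac (l : ℚ) (n : ℕ) : ℚ := ∏ j ∈ Finset.range n, (1 - j * l)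

/-- Degenerate logarithm `log_λ(1+t) = Σ_{n≥1} λ^{n-1}(1)_{n,1/λ} tⁿ/n!`. -/
def Ld (l : ℚ) : PowerSeries ℚ :=
  PowerSeries.mk fun n => if n = 0 then 0 else dc l n / n.factorial

/-- Degenerate exponential `e_λ(t) = Σ_{n≥0} (1)_{n,λ} tⁿ/n!`. -/
def Ed (l : ℚ) : PowerSeries ℚ := PowerSeries.mk fun n => ffac l n / n.factorial

/-- Degenerate Stirling numbers of the first kind. -/
def S1d (l : ℚ) (n k : ℕ) : ℚ :=
  n.factorial / k.factorial * PowerSeries.coeff n (Ld l ^ k)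

/-- Degenerate Stirling numbers of the second kind. -/
def S2d (l : ℚ) (n k : ℕ) : ℚ :=
  n.factorial / k.factorial * PowerSeries.coeff n ((Ed l - 1) ^ k)

/-- Bell numbers of the second kind: `log(1 + log(1+t)) = Σ_{n≥1} bel_n tⁿ/n!`. -/
def belNum (n : ℕ) : ℚ := n.factorial * PowerSeries.coeff n (pcomp Lq Lq)

/-- Bell numbers of the second kind via the explicit formula. -/
def belN (m : ℕ) : ℚ :=
  ∑ k ∈ Finset.Icc 1 m, (-1) ^ (k - 1) * (k - 1).factorial * S1 m k

/-- Bell polynomials of the second kind. -/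
def belPoly (n : ℕ) : Polynomial ℚ :=
  ∑ k ∈ Finset.Icc 1 n,
    Polynomial.C ((-1) ^ (k - 1) * (k - 1).factorial * S1 n k) * Polynomial.X ^ k

/-- Bell polynomials of the second kind evaluated at `x : ℚ`. -/
def belVal (x : ℚ) (m : ℕ) : ℚ :=
  ∑ k ∈ Finset.Icc 1 m, (-1) ^ (k - 1) * (k - 1).factorial * S1 m k * x ^ k

/-- Degenerate Bell numbers of the second kind via generating function. -/
def belNumD (l : ℚ) (n : ℕ) : ℚ := n.factorial * PowerSeries.coeff n (pcomp (Ld l) (Ld l))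

/-- Degenerate Bell numbers of the second kind via the explicit formula. -/
def belND (l : ℚ) (m : ℕ) : ℚ := ∑ j ∈ Finset.Icc 1 m, dc l j * S1d l m j

/-- Degenerate Bell polynomials of the second kind. -/
def belPolyD (l : ℚ) (n : ℕ) : Polynomial ℚ :=
  ∑ k ∈ Finset.Icc 1 n, Polynomial.C (dc l k * S1d l n k) * Polynomial.X ^ k

/-- `log(1+t)` as a power series over `ℚ[x]`. -/
def LqP : PowerSeries (Polynomial ℚ) :=
  PowerSeries.mk fun n => if n = 0 then 0 else Polynomial.C ((-1) ^ (n + 1) / n : ℚ)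

/-- `-log(1-t)` as a power series over `ℚ[x]`. -/
def LabsP : PowerSeries (Polynomial ℚ) :=
  PowerSeries.mk fun n => if n = 0 then 0 else Polynomial.C (1 / n : ℚ)

/-- `log(1-t)` as a power series over `ℚ[x]`. -/
def MP : PowerSeries (Polynomial ℚ) :=
  PowerSeries.mk fun n => if n = 0 then 0 else Polynomial.C (-(1 / n) : ℚ)

/-- `log_λ(1+t)` as a power series over `ℚ[x]`. -/
def LdP (l : ℚ) : PowerSeries (Polynomial ℚ) :=
  PowerSeries.mk fun n => if n = 0 then 0 else Polynomial.C (dc l n / n.factorial)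

/-- The polylogarithm `Li_k(y) = Σ_{m≥1} yᵐ/mᵏ` as a power series over `ℚ[x]`. -/
def LiP (k : ℤ) : PowerSeries (Polynomial ℚ) :=
  PowerSeries.mk fun m => if m = 0 then 0 else Polynomial.C (((m : ℚ) ^ k)⁻¹)

/-- The degenerate polylogarithm `Li_{k,λ}` as a power series over `ℚ[x]`. -/
def LidP (l : ℚ) (k : ℤ) : PowerSeries (Polynomial ℚ) :=
  PowerSeries.mk fun m => if m = 0 then 0 else
    Polynomial.C ((-1) ^ (m - 1) * dc l m / ((m - 1).factorial * (m : ℚ) ^ k))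

/-- `-x · log(1-t)` over `ℚ[x]`. -/
def innerP : PowerSeries (Polynomial ℚ) := PowerSeries.C (Polynomial.X : Polynomial ℚ) * LabsP

/-- `-x · log_λ(1-t)` over `ℚ[x]`. -/
def innerD (l : ℚ) : PowerSeries (Polynomial ℚ) :=
  PowerSeries.C (Polynomial.X : Polynomial ℚ) *
    PowerSeries.mk fun n => if n = 0 then 0 else
      Polynomial.C ((-1) ^ (n + 1) * dc l n / n.factorial)

/-- Poly-Bell polynomials of the second kind via generating function. -/
def polyBellP (k : ℤ) (n : ℕ) : Polynomial ℚ :=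
  (n.factorial : ℚ) • PowerSeries.coeff n (pcomp (LiP k) innerP)

/-- Poly-Bell polynomials of the second kind via the explicit formula. -/
def belPk (k : ℤ) (n : ℕ) : Polynomial ℚ :=
  ∑ l ∈ Finset.Icc 1 n,
    Polynomial.C ((((l : ℚ) ^ (k - 1))⁻¹) * (l - 1).factorial * uS1 n l) * Polynomial.X ^ l

/-- Degenerate poly-Bell polynomials of the second kind via generating function. -/
def belDPk (l : ℚ) (k : ℤ) (n : ℕ) : Polynomial ℚ :=
  (n.factorial : ℚ) • PowerSeries.coeff n (pcomp (LidP l k) (innerD l))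

/-- Degenerate poly-Bell polynomials of the second kind via the explicit formula. -/
def belE (l : ℚ) (k : ℤ) (m : ℕ) : Polynomial ℚ :=
  (-1 : Polynomial ℚ) ^ (m - 1) *
    ∑ j ∈ Finset.Icc 1 m,
      Polynomial.C ((((j : ℚ) ^ (k - 1))⁻¹) * dc l j * S1d l m j) * Polynomial.X ^ j

/-! Stirling numbers of the two kinds are the coefficient matrices of the mutually inverse
substitutions `t ↦ log(1+t)` and `t ↦ eᵗ - 1`, so `∑ₖ S₁(k,j) S₂(n,k) = δₙⱼ`. Expanding
`bel_k` and exchanging the sums, this orthogonality collapses `∑ₖ bel_k S₂(n,k)` to the single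
term `(-1)^(n-1) (n-1)!`. The inverse relation `log(1 + (eᵗ - 1)) = t` is checked by
differentiating: both sides vanish at `0`, and the chain rule turns the derivative of the
left side into `eᵗ / (1 + (eᵗ - 1)) = 1`. -/

namespace PowerSeries

theorem coeff_pow_eq_zero_of_lt {R : Type*} [CommRing R] {f : R⟦X⟧} (hf : constantCoeff f = 0)
    {k n : ℕ} (h : n < k) : coeff n (f ^ k) = 0 :=
  X_pow_dvd_iff.mp (pow_dvd_pow_of_dvd (X_dvd_iff.mpr hf) k) n h

theorem coeff_subst_of_constantCoeff_eq_zero {R : Type*} [CommRing R] {f : R⟦X⟧}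
    (hf : constantCoeff f = 0) (g : R⟦X⟧) (n : ℕ) :
    coeff n (g.subst f) = ∑ k ∈ range (n + 1), coeff k g * coeff n (f ^ k) := by
  simp only [coeff_subst' (HasSubst.of_constantCoeff_zero' hf), smul_eq_mul]
  refine finsum_eq_sum_of_support_subset _ fun k hk ↦ ?_
  by_contra hkn
  exact hk (by dsimp only; rw [coeff_pow_eq_zero_of_lt hf (by simpa using hkn), mul_zero])

theorem mk_neg_one_pow_mul_one_add_X {A : Type*} [CommRing A] [Algebra ℚ A] :
    (mk fun n ↦ algebraMap ℚ A ((-1 : ℚ) ^ n)) * (1 + X) = 1 := by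
  have h := congrArg (rescale (-1 : A)) (mk_one_mul_one_sub_eq_one (S := A))
  simp only [map_mul, map_sub, rescale_X, map_one, map_neg, neg_mul, one_mul,
    sub_neg_eq_add] at h
  convert h using 2
  ext n
  simp

theorem log_subst_exp_sub_one : (log ℚ).subst (exp ℚ - 1) = X := by
  have hf : HasSubst (exp ℚ - 1) := HasSubst.exp_sub_one
  refine derivative.ext ?_ ?_
  · have h := congrArg (substAlgHom hf) (mk_neg_one_pow_mul_one_add_X (A := ℚ))
    rw [map_mul, map_add, map_one, coe_substAlgHom, subst_X hf, add_sub_cancel] at h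
    rw [derivative_subst hf, deriv_log, map_sub, derivative_exp, derivative_one, sub_zero,
      derivative_X, h]
  · rw [constantCoeff_X, ← coeff_zero_eq_constantCoeff_apply, coeff_zero_eq_constantCoeff]
    exact constantCoeff_subst_eq_zero (by simp [← constantCoeff_eq, constantCoeff_exp]) _
      constantCoeff_log

end PowerSeries

theorem Lq_eq_log : Lq = log ℚ := by
  ext n
  simp [Lq]

theorem S1_eq_zero_of_lt {k j : ℕ} (h : k < j) : S1 k j = 0 := by
  rw [S1, coeff_pow_eq_zero_of_lt (by simp [Lq_eq_log]) h, mul_zero]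

theorem sum_S1_mul_S2 (j n : ℕ) :
    ∑ k ∈ range (n + 1), S1 k j * S2 n k = if n = j then 1 else 0 := by
  have hf : constantCoeff (exp ℚ - 1) = 0 := by simp [constantCoeff_exp]
  have hinv : ∑ k ∈ range (n + 1), coeff k (Lq ^ j) * coeff n ((exp ℚ - 1) ^ k)
      = if n = j then 1 else 0 := by
    rw [← coeff_subst_of_constantCoeff_eq_zero hf, Lq_eq_log, subst_pow HasSubst.exp_sub_one,
      log_subst_exp_sub_one, coeff_X_pow]
  calc ∑ k ∈ range (n + 1), S1 k j * S2 n k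
      = ∑ k ∈ range (n + 1),
          (n.factorial / j.factorial : ℚ) * (coeff k (Lq ^ j) * coeff n ((exp ℚ - 1) ^ k)) :=
        sum_congr rfl fun k _ ↦ by rw [S1, S2]; field_simp
    _ = if n = j then 1 else 0 := by
        rw [← mul_sum, hinv]
        split_ifs with h
        · subst h; field_simp
        · rw [mul_zero]

theorem sum_Icc_S1_mul_S2 {j : ℕ} (hj : 1 ≤ j) (n : ℕ) :
    ∑ k ∈ Icc 1 n, S1 k j * S2 n k = if n = j then 1 else 0 := by
  rw [← sum_S1_mul_S2]
  refine sum_subset (fun k hk ↦ by simp at hk ⊢; omega) fun k hk₀ hk ↦ ?_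
  rw [S1_eq_zero_of_lt (by simp at hk₀ hk; omega), zero_mul]

theorem belN_eq_sum_Icc {k n : ℕ} (hkn : k ≤ n) :
    belN k = ∑ j ∈ Icc 1 n, (-1) ^ (j - 1) * (j - 1).factorial * S1 k j :=
  sum_subset (Icc_subset_Icc_right hkn) fun j _ hj ↦ by
    rw [S1_eq_zero_of_lt (by simp_all), mul_zero]

theorem sum_belN_mul_S2 {n : ℕ} (hn : 1 ≤ n) :
    ∑ k ∈ Icc 1 n, belN k * S2 n k = (-1 : ℚ) ^ (n - 1) * (n - 1).factorial := by
  calc ∑ k ∈ Icc 1 n, belN k * S2 n k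
      = ∑ k ∈ Icc 1 n, ∑ j ∈ Icc 1 n,
          (-1 : ℚ) ^ (j - 1) * (j - 1).factorial * (S1 k j * S2 n k) := by
        refine sum_congr rfl fun k hk ↦ ?_
        rw [belN_eq_sum_Icc (mem_Icc.mp hk).2, sum_mul]
        simp only [mul_assoc]
    _ = ∑ j ∈ Icc 1 n, (-1 : ℚ) ^ (j - 1) * (j - 1).factorial * if n = j then 1 else 0 := by
        rw [sum_comm]
        exact sum_congr rfl fun j hj ↦ by rw [← mul_sum, sum_Icc_S1_mul_S2 (mem_Icc.mp hj).1]
    _ = (-1) ^ (n - 1) * (n - 1).factorial := by simp [hn]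

theorem stmt5 (n : ℕ) (hn : 1 ≤ n) :
    (1 : ℚ) = (-1 : ℚ) ^ (n - 1) / (n - 1).factorial *
      ∑ k ∈ Finset.Icc 1 n, belN k * S2 n k := by
  rw [sum_belN_mul_S2 hn]
  field_simp
  rw [← pow_mul, pow_mul', neg_one_sq, one_pow]

end
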